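/- Every Darboux injection f : X → S¹ from a nonempty connected compact metrizable space X to the circle S¹ is a topological embedding, i.e., a homeomorphism of X onto its image with the subspace topology. -/

import Mathlib

/-!
An injective continuous map from a compact space to a Hausdorff space is an embedding, so it is
enough to show that f is continuous at each x. Choose points p₁, p₂ of the circle on either side
of f x and close to it, and let W be the complement of the finite set f⁻¹{p₁, p₂}. By boundary
bumping, the closure of every component of W meets f⁻¹{p₁, p₂}. A point a is adherent to at most
two components of W: their images are pairwise disjoint connected subsets of S¹ \ {f a} ≅ ℝ
accumulating at f a, that is, unbounded intervals. Hence W has finitely many components, each of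
them open, and the component of x is a neighbourhood of x that f maps into the short arc between
p₁ and p₂.
-/

open Set Topology Function

section LinearOrder

variable {α : Type*} [LinearOrder α] [Nonempty α] {s t u : Set α}

theorem Set.OrdConnected.not_disjoint_of_not_bddAbove (hs : s.OrdConnected)
    (hs' : ¬BddAbove s) (ht' : ¬BddAbove t) : ¬Disjoint s t := by
  obtain ⟨a, ha, -⟩ := not_bddAbove_iff.1 hs' (Classical.arbitrary α)
  obtain ⟨b, hb, hab⟩ := not_bddAbove_iff.1 ht' a
  obtain ⟨c, hc, hbc⟩ := not_bddAbove_iff.1 hs' b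
  exact not_disjoint_iff.2 ⟨b, hs.out ha hc ⟨hab.le, hbc.le⟩, hb⟩

theorem Set.OrdConnected.not_disjoint_of_not_bddBelow (hs : s.OrdConnected)
    (hs' : ¬BddBelow s) (ht' : ¬BddBelow t) : ¬Disjoint s t :=
  Set.OrdConnected.not_disjoint_of_not_bddAbove (α := αᵒᵈ) hs.dual hs' ht'

theorem not_pairwise_disjoint_of_unbounded (hs : s.OrdConnected) (ht : t.OrdConnected)
    (hs' : ¬BddAbove s ∨ ¬BddBelow s) (ht' : ¬BddAbove t ∨ ¬BddBelow t)
    (hu' : ¬BddAbove u ∨ ¬BddBelow u) :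
    ¬(Disjoint s t ∧ Disjoint s u ∧ Disjoint t u) := by
  rintro ⟨hst, hsu, htu⟩
  rcases hs' with hs' | hs' <;> rcases ht' with ht' | ht' <;> rcases hu' with hu' | hu'
  exacts [hs.not_disjoint_of_not_bddAbove hs' ht' hst, hs.not_disjoint_of_not_bddAbove hs' ht' hst,
    hs.not_disjoint_of_not_bddAbove hs' hu' hsu, ht.not_disjoint_of_not_bddBelow ht' hu' htu,
    ht.not_disjoint_of_not_bddAbove ht' hu' htu, hs.not_disjoint_of_not_bddBelow hs' hu' hsu,
    hs.not_disjoint_of_not_bddBelow hs' ht' hst, hs.not_disjoint_of_not_bddBelow hs' ht' hst]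

end LinearOrder

section Topology

variable {X : Type*} [TopologicalSpace X]

theorem mem_closure_of_isPreconnected_insert [T1Space X] {T : Set X} {q : X}
    (h : IsPreconnected (insert q T)) (hT : T.Nonempty) : q ∈ closure T := by
  by_contra hq
  have hqT : q ∉ T := fun h => hq (subset_closure h)
  obtain ⟨z, hz, hzu, hzv⟩ := h (closure T)ᶜ {q}ᶜ isClosed_closure.isOpen_compl
    isOpen_compl_singleton
    (insert_subset (Or.inl hq) fun t ht => Or.inr (ne_of_mem_of_not_mem ht hqT))
    ⟨q, mem_insert q T, hq⟩
    (hT.mono fun t ht => ⟨mem_insert_of_mem q ht, ne_of_mem_of_not_mem ht hqT⟩)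
  rcases hz with rfl | hz
  exacts [hzv rfl, hzu (subset_closure hz)]

theorem connectedComponentIn_disjoint_of_ne {F : Set X} {x y : X}
    (h : connectedComponentIn F x ≠ connectedComponentIn F y) :
    Disjoint (connectedComponentIn F x) (connectedComponentIn F y) :=
  Set.disjoint_left.2 fun _ hx hy =>
    h ((connectedComponentIn_eq hx).trans (connectedComponentIn_eq hy).symm)

theorem closure_connectedComponentIn_inter_subset (F : Set X) (x : X) :
    closure (connectedComponentIn F x) ∩ F ⊆ connectedComponentIn F x := by
  rintro z ⟨hzx, hzF⟩
  have hx : x ∈ F := connectedComponentIn_nonempty_iff.1 (closure_nonempty_iff.1 ⟨z, hzx⟩)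
  refine (isPreconnected_connectedComponentIn.subset_closure (subset_insert z _)
      (insert_subset hzx subset_closure)).subset_connectedComponentIn
    (mem_insert_of_mem z (mem_connectedComponentIn hx))
    (insert_subset hzF (connectedComponentIn_subset F x)) (mem_insert z _)

theorem isOpen_connectedComponentIn_of_finite {W : Set X} (hW : IsOpen W)
    (hfin : (connectedComponentIn W '' W).Finite) (x : X) :
    IsOpen (connectedComponentIn W x) := by
  set others := connectedComponentIn W '' W \ {connectedComponentIn W x}
  have hx : connectedComponentIn W x = W \ ⋃ C ∈ others, closure C := by
    ext z
    constructor
    · intro hz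
      refine ⟨connectedComponentIn_subset W x hz, ?_⟩
      simp only [mem_iUnion₂, not_exists]
      rintro _ ⟨⟨y, -, rfl⟩, hne⟩ hzy
      have hzy' := closure_connectedComponentIn_inter_subset W y
        ⟨hzy, connectedComponentIn_subset W x hz⟩
      exact Set.disjoint_left.1 (connectedComponentIn_disjoint_of_ne hne) hzy' hz
    · rintro ⟨hzW, hz⟩
      by_contra hzx
      have hzW' : connectedComponentIn W z ∈ others :=
        ⟨mem_image_of_mem _ hzW, fun h => hzx (h ▸ mem_connectedComponentIn hzW)⟩
      exact hz (mem_biUnion hzW' (subset_closure (mem_connectedComponentIn hzW)))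
  rw [hx]
  exact hW.sdiff (hfin.sdiff.isClosed_biUnion fun _ _ => isClosed_closure)

theorem exists_isClopen_of_connectedComponent_subset [CompactSpace X] [T2Space X] {x : X}
    {U : Set X} (hU : IsOpen U) (h : connectedComponent x ⊆ U) :
    ∃ V, IsClopen V ∧ x ∈ V ∧ V ⊆ U := by
  rw [connectedComponent_eq_iInter_isClopen] at h
  obtain ⟨t, ht⟩ := hU.isClosed_compl.isCompact.elim_finite_subfamily_closed
    (fun V : {V : Set X // IsClopen V ∧ x ∈ V} => V.1) (fun V => V.2.1.isClosed)
    (Set.disjoint_iff_inter_eq_empty.1 (disjoint_compl_left_iff_subset.2 h))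
  exact ⟨⋂ V ∈ t, V.1, isClopen_biInter_finset fun V _ => V.2.1,
    mem_iInter₂.2 fun V _ => V.2.2,
    disjoint_compl_left_iff_subset.1 (Set.disjoint_iff_inter_eq_empty.2 ht)⟩

theorem closure_connectedComponentIn_not_subset [CompactSpace X] [T2Space X] [ConnectedSpace X]
    {U : Set X} (hU : IsOpen U) (hU' : U ≠ univ) {x : X} (hx : x ∈ U) :
    ¬closure (connectedComponentIn U x) ⊆ U := by
  intro hsub
  -- A clopen subset of the compact set `closure V` that lies inside `V` is clopen in `X`.
  obtain ⟨V, hV, hCV, hVU⟩ := normal_exists_closure_subset isClosed_closure hU hsub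
  set E := closure V
  have hxE : x ∈ E := subset_closure (hCV (subset_closure (mem_connectedComponentIn hx)))
  have : CompactSpace E := isCompact_iff_compactSpace.1 isClosed_closure.isCompact
  have hcomp : connectedComponent (⟨x, hxE⟩ : E) ⊆ Subtype.val ⁻¹' V := fun z hz =>
    hCV <| subset_closure <| connectedComponentIn_mono x hVU <|
      (connectedComponentIn_eq_image hxE).symm ▸ mem_image_of_mem _ hz
  obtain ⟨Q, hQ, hxQ, hQV⟩ :=
    exists_isClopen_of_connectedComponent_subset (hV.preimage continuous_subtype_val) hcomp
  obtain ⟨O, hO, hOQ⟩ := isOpen_induced_iff.1 hQ.isOpen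
  have hQO : Subtype.val '' Q = O ∩ V := by
    ext z
    constructor
    · rintro ⟨z, hz, rfl⟩
      exact ⟨hOQ.symm.subset hz, hQV hz⟩
    · rintro ⟨hzO, hzV⟩
      exact ⟨⟨z, subset_closure hzV⟩, hOQ.subset hzO, rfl⟩
  have hQX : IsClopen (Subtype.val '' Q) :=
    ⟨(hQ.isClosed.isCompact.image continuous_subtype_val).isClosed, hQO ▸ hO.inter hV⟩
  refine hU' (eq_univ_of_univ_subset ?_)
  rw [← hQX.eq_univ ⟨x, ⟨x, hxE⟩, hxQ, rfl⟩]
  exact hQO ▸ inter_subset_right.trans (subset_closure.trans hVU)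

end Topology

section RealChart

variable {Y : Type*} [TopologicalSpace Y] {e : ℝ → Y} {T : Set Y}

theorem IsPreconnected.subset_image_Ioo [T2Space Y] (he : IsOpenEmbedding e)
    (hT : IsPreconnected T) {a b : ℝ} (hTab : (T ∩ e '' Ioo a b).Nonempty) (ha : e a ∉ T)
    (hb : e b ∉ T) :
    T ⊆ e '' Ioo a b := by
  refine hT.subset_left_of_subset_union (he.isOpenMap _ isOpen_Ioo)
    (isCompact_Icc.image he.continuous).isClosed.isOpen_compl
    (disjoint_compl_right_iff_subset.2 (image_mono Ioo_subset_Icc_self)) ?_ hTab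
  intro y hy
  by_cases hy' : y ∈ e '' Icc a b
  · obtain ⟨s, hs, rfl⟩ := hy'
    left
    refine mem_image_of_mem e ⟨lt_of_le_of_ne hs.1 ?_, lt_of_le_of_ne hs.2 ?_⟩
    · rintro rfl; exact ha hy
    · rintro rfl; exact hb hy
  · exact Or.inr hy'

theorem not_bddAbove_or_not_bddBelow_preimage_of_mem_closure [T2Space Y] (he : Continuous e)
    (hT : T ⊆ range e) {q : Y} (hq : q ∉ range e) (hqT : q ∈ closure T) :
    ¬BddAbove (e ⁻¹' T) ∨ ¬BddBelow (e ⁻¹' T) := by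
  by_contra! h
  obtain ⟨m, M, hmM⟩ := bddBelow_bddAbove_iff_subset_Icc.1 ⟨h.2, h.1⟩
  have hTK : T ⊆ e '' Icc m M := fun y hy => by
    obtain ⟨s, rfl⟩ := hT hy
    exact mem_image_of_mem e (hmM hy)
  exact hq (image_subset_range _ _ <|
    (isCompact_Icc.image he).isClosed.closure_subset_iff.2 hTK hqT)

theorem IsPreconnected.ordConnected_preimage (he : IsEmbedding e) (hT : IsPreconnected T)
    (hTe : T ⊆ range e) : (e ⁻¹' T).OrdConnected :=
  isPreconnected_iff_ordConnected.1 <|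
    he.isInducing.isPreconnected_image.1 (by rwa [image_preimage_eq_of_subset hTe])

theorem not_pairwise_disjoint_of_mem_closure [T2Space Y] (he : IsEmbedding e) {q : Y}
    (hq : range e = {q}ᶜ)
    {A B C : Set Y} (hA : IsPreconnected A) (hB : IsPreconnected B)
    (hqA : q ∉ A) (hqB : q ∉ B) (hqC : q ∉ C)
    (hA' : q ∈ closure A) (hB' : q ∈ closure B) (hC' : q ∈ closure C) :
    ¬(Disjoint A B ∧ Disjoint A C ∧ Disjoint B C) := by
  have hrange : ∀ {T : Set Y}, q ∉ T → T ⊆ range e := fun hqT y hy =>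
    hq ▸ ne_of_mem_of_not_mem hy hqT
  have hq' : q ∉ range e := by simp [hq]
  rintro ⟨hAB, hAC, hBC⟩
  exact not_pairwise_disjoint_of_unbounded (hA.ordConnected_preimage he (hrange hqA))
    (hB.ordConnected_preimage he (hrange hqB))
    (not_bddAbove_or_not_bddBelow_preimage_of_mem_closure he.continuous (hrange hqA) hq' hA')
    (not_bddAbove_or_not_bddBelow_preimage_of_mem_closure he.continuous (hrange hqB) hq' hB')
    (not_bddAbove_or_not_bddBelow_preimage_of_mem_closure he.continuous (hrange hqC) hq' hC')
    ⟨hAB.preimage e, hAC.preimage e, hBC.preimage e⟩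

end RealChart

theorem exists_isOpenEmbedding_range_eq_compl_singleton {E : Type*} [NormedAddCommGroup E]
    [InnerProductSpace ℝ E] (hE : Module.finrank ℝ E = 2) (q : Metric.sphere (0 : E) 1) :
    ∃ e : ℝ → Metric.sphere (0 : E) 1, IsOpenEmbedding e ∧ range e = {q}ᶜ := by
  have : Fact (Module.finrank ℝ E = 1 + 1) := ⟨hE⟩
  let φ := stereographic' 1 q
  have hsymm : φ.symm.source = univ := stereographic'_target q
  let ι : ℝ ≃ₜ EuclideanSpace ℝ (Fin 1) :=
    ((EuclideanSpace.equiv (Fin 1) ℝ).toHomeomorph.trans (Homeomorph.funUnique (Fin 1) ℝ)).symm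
  refine ⟨φ.symm ∘ ι, (φ.symm.isOpenEmbedding hsymm).comp ι.isOpenEmbedding, ?_⟩
  rw [range_comp, ι.range_coe, ← hsymm]
  exact (φ.symm_image_target_eq_source).trans (stereographic'_source q)

def IsDarboux {X Y : Type*} [TopologicalSpace X] [TopologicalSpace Y] (f : X → Y) : Prop :=
  ∀ C : Set X, IsPreconnected C → IsPreconnected (f '' C)

namespace IsDarboux

variable {X Y : Type*} [TopologicalSpace X] [TopologicalSpace Y] {f : X → Y}

theorem mem_closure_image [T1Space Y] (hf : IsDarboux f) {C : Set X} (hC : IsPreconnected C)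
    (hne : C.Nonempty) {a : X} (ha : a ∈ closure C) : f a ∈ closure (f '' C) := by
  have h := hf _ (hC.subset_closure (subset_insert a C) (insert_subset ha subset_closure))
  rw [image_insert_eq] at h
  exact mem_closure_of_isPreconnected_insert h (hne.image f)

theorem finite_setOf_mem_closure_connectedComponentIn [T2Space Y]
    (hY : ∀ q : Y, ∃ e : ℝ → Y, IsOpenEmbedding e ∧ range e = {q}ᶜ)
    (hf : IsDarboux f) (hinj : Injective f)
    {W : Set X} {a : X} (ha : a ∉ W) :
    {C ∈ connectedComponentIn W '' W | a ∈ closure C}.Finite := by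
  set S := {C ∈ connectedComponentIn W '' W | a ∈ closure C}
  have hS : ∀ D ∈ S, IsPreconnected (f '' D) ∧ f a ∉ f '' D ∧ f a ∈ closure (f '' D) := by
    rintro _ ⟨⟨z, hz, rfl⟩, haD⟩
    have hD := isPreconnected_connectedComponentIn (F := W) (x := z)
    refine ⟨hf _ hD, ?_, hf.mem_closure_image hD ⟨z, mem_connectedComponentIn hz⟩ haD⟩
    rw [hinj.mem_set_image]
    exact fun h => ha (connectedComponentIn_subset W z h)
  have hdisj : ∀ D ∈ S, ∀ D' ∈ S, D ≠ D' → Disjoint (f '' D) (f '' D') := by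
    rintro _ ⟨⟨z, -, rfl⟩, -⟩ _ ⟨⟨z', -, rfl⟩, -⟩ hne
    exact (disjoint_image_iff hinj).2 (connectedComponentIn_disjoint_of_ne hne)
  by_contra hinf
  obtain ⟨t, hts, ht⟩ := Set.Infinite.exists_subset_card_eq hinf 3
  obtain ⟨A, B, C, hAB, hAC, hBC, rfl⟩ := Finset.card_eq_three.1 ht
  have hA : A ∈ S := hts (by simp)
  have hB : B ∈ S := hts (by simp)
  have hC : C ∈ S := hts (by simp)
  obtain ⟨e, he, hrange⟩ := hY (f a)
  exact not_pairwise_disjoint_of_mem_closure he.isEmbedding hrange (hS A hA).1 (hS B hB).1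
    (hS A hA).2.1 (hS B hB).2.1 (hS C hC).2.1 (hS A hA).2.2 (hS B hB).2.2 (hS C hC).2.2
    ⟨hdisj A hA B hB hAB, hdisj A hA C hC hAC, hdisj B hB C hC hBC⟩

theorem isOpen_connectedComponentIn_compl_preimage [CompactSpace X] [T2Space X] [ConnectedSpace X]
    [T2Space Y] (hY : ∀ q : Y, ∃ e : ℝ → Y, IsOpenEmbedding e ∧ range e = {q}ᶜ)
    (hf : IsDarboux f) (hinj : Injective f) {S : Set Y} (hS : S.Finite) (x : X) :
    IsOpen (connectedComponentIn (f ⁻¹' S)ᶜ x) := by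
  have hfin : (f ⁻¹' S).Finite := hS.preimage hinj.injOn
  by_cases hWu : (f ⁻¹' S)ᶜ = univ
  · rw [hWu, connectedComponentIn_univ, PreconnectedSpace.connectedComponent_eq_univ]
    exact isOpen_univ
  have hW : IsOpen (f ⁻¹' S)ᶜ := hfin.isClosed.isOpen_compl
  have hadj : ∀ a ∈ f ⁻¹' S,
      {C ∈ connectedComponentIn (f ⁻¹' S)ᶜ '' (f ⁻¹' S)ᶜ | a ∈ closure C}.Finite :=
    fun a ha => finite_setOf_mem_closure_connectedComponentIn hY hf hinj (not_not_intro ha)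
  refine isOpen_connectedComponentIn_of_finite hW ((hfin.biUnion hadj).subset ?_) x
  rintro _ ⟨z, hz, rfl⟩
  obtain ⟨a, haC, ha⟩ := not_subset.1 (closure_connectedComponentIn_not_subset hW hWu hz)
  exact mem_biUnion (not_not.1 ha) ⟨⟨z, hz, rfl⟩, haC⟩

theorem continuous [CompactSpace X] [T2Space X] [ConnectedSpace X] [T2Space Y]
    (hY : ∀ q : Y, ∃ e : ℝ → Y, IsOpenEmbedding e ∧ range e = {q}ᶜ)
    (hf : IsDarboux f) (hinj : Injective f) : Continuous f := by
  refine continuous_iff_continuousAt.2 fun x N hN => ?_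
  obtain ⟨e₀, -, hrange₀⟩ := hY (f x)
  obtain ⟨e, he, hrange⟩ := hY (e₀ 0)
  have hx₀ : e₀ 0 ≠ f x := by
    simpa only [hrange₀, mem_compl_iff, mem_singleton_iff] using mem_range_self (f := e₀) 0
  obtain ⟨c, hcx⟩ : f x ∈ range e := by
    rw [hrange]
    exact hx₀.symm
  rw [← hcx] at hN
  obtain ⟨ε, hε, hεN⟩ :=
    (nhds_basis_Ioo_pos c).mem_iff.1 (he.continuous.continuousAt.preimage_mem_nhds hN)
  have hc : c ∈ Ioo (c - ε) (c + ε) := ⟨by linarith, by linarith⟩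
  set C := connectedComponentIn (f ⁻¹' {e (c - ε), e (c + ε)})ᶜ x
  have hxC : x ∈ C := mem_connectedComponentIn <| by
    simp only [mem_compl_iff, mem_preimage, mem_insert_iff, mem_singleton_iff, ← hcx,
      he.injective.eq_iff, not_or]
    exact ⟨hc.1.ne', hc.2.ne⟩
  have hfC : f '' C ⊆ e '' Ioo (c - ε) (c + ε) := by
    refine (hf C isPreconnected_connectedComponentIn).subset_image_Ioo he
      ⟨f x, mem_image_of_mem f hxC, c, hc, hcx⟩ ?_ ?_ <;>
    · rintro ⟨z, hz, hze⟩
      exact connectedComponentIn_subset _ x hz (by simp [hze])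
  have hC : IsOpen C := isOpen_connectedComponentIn_compl_preimage hY hf hinj (toFinite _) x
  refine Filter.mem_map.2 <| Filter.mem_of_superset (hC.mem_nhds hxC) fun z hz => ?_
  obtain ⟨s, hs, hsz⟩ := hfC (mem_image_of_mem f hz)
  rw [mem_preimage, ← hsz]
  exact hεN hs

end IsDarboux

theorem darboux_injection_to_circle_isEmbedding_general {X : Type*} [TopologicalSpace X]
    [CompactSpace X] [ConnectedSpace X] [TopologicalSpace.MetrizableSpace X]
    (f : X → (Metric.sphere (0 : EuclideanSpace ℝ (Fin 2)) 1))
    (hinj : Function.Injective f)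
    (hdarboux : ∀ C : Set X, IsPreconnected C → IsPreconnected (f '' C)) :
    Topology.IsEmbedding f :=
  have hcont : Continuous f := IsDarboux.continuous
    (exists_isOpenEmbedding_range_eq_compl_singleton finrank_euclideanSpace_fin) hdarboux hinj
  (hcont.isClosedEmbedding hinj).isEmbedding

/-- Every Darboux injection `f : X → S¹` from a nonempty connected compact metrizable
space `X` to the circle is a topological embedding. -/
theorem darboux_injection_to_circle_isEmbedding {X : Type*} [TopologicalSpace X]
    [CompactSpace X] [ConnectedSpace X] [TopologicalSpace.MetrizableSpace X] [Nonempty X]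
    (f : X → (Metric.sphere (0 : EuclideanSpace ℝ (Fin 2)) 1))
    (hinj : Function.Injective f)
    (hdarboux : ∀ C : Set X, IsPreconnected C → IsPreconnected (f '' C)) :
    Topology.IsEmbedding f :=
  darboux_injection_to_circle_isEmbedding_general f hinj hdarboux
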